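/- Privacy amplification by subsampling: let K be the mechanism that samples m out of n records uniformly without replacement. If M : X^m → Y satisfies (ε, δ)-differential privacy with respect to the replacement relation on datasets of size m, then the mechanism M ∘ K : X^n → Y satisfies (log(1 + (m/n)(e^ε − 1)), (m/n)δ)-differential privacy with respect to the replacement relation on datasets of size n. -/

import Mathlib

/-!
Split the samples `s : Fin m ↪ Fin n` according to whether they contain the index `i` at which
`D` and `D'` differ; on samples avoiding `i` the two mechanisms coincide. A sample containing `i`
is a neighbour of itself (read in `D'`) and also, for each of the `n - m` indices `j` it misses, of
the sample avoiding `i` obtained by swapping `i` and `j`; every sample avoiding `i` arises this way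
exactly `m` times. This gives two bounds on the mass of the samples containing `i`, and a convex
combination of them, together with the count `#{s ∋ i} = (m / n) · #{s}`, yields the claim.
-/

open Finset

def ReplacementNeighbors {ι X : Type*} (D D' : ι → X) : Prop :=
  ∃ i, ∀ j, j ≠ i → D j = D' j

theorem replacementNeighbors_comp {α β X : Type*} {D D' : β → X} {i : β}
    (hD : ∀ j, j ≠ i → D j = D' j) {s : α ↪ β} (hi : i ∈ Set.range s) {t : α → β}
    (hst : ∀ k, s k ≠ i → s k = t k) : ReplacementNeighbors (D ∘ s) (D' ∘ t) := by
  obtain ⟨k₀, hk₀⟩ := hi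
  refine ⟨k₀, fun k hk => ?_⟩
  have hki : s k ≠ i := fun h => hk (s.injective (h.trans hk₀.symm))
  rw [Function.comp_apply, Function.comp_apply, hD _ hki, hst k hki]

namespace Function.Embedding

variable {α β : Type*} [DecidableEq β]

theorem trans_swap_trans_swap (s : α ↪ β) (a b : β) :
    (s.trans (Equiv.swap a b).toEmbedding).trans (Equiv.swap a b).toEmbedding = s := by
  ext
  simp

theorem notMem_range_trans_swap {s : α ↪ β} {a b : β} (hb : b ∉ Set.range s) :
    a ∉ Set.range (s.trans (Equiv.swap a b).toEmbedding) := by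
  rintro ⟨k, hk⟩
  exact hb ⟨k, by simpa [Equiv.swap_apply_eq_iff] using hk⟩

end Function.Embedding

open Function.Embedding

theorem subsampling_mixture_bound {fA gA gB a b m n e δ : ℝ} (hm : 0 ≤ m) (hn : 0 < n)
    (he : 1 ≤ e) (hcard : a * (n - m) = m * b) (h_same : fA ≤ e * gA + a * δ)
    (h_swap : (n - m) * fA ≤ e * (m * gB) + (n - m) * (a * δ)) :
    fA + gB ≤ (1 + m / n * (e - 1)) * (gA + gB) + (a + b) * (m / n * δ) := by
  -- these weights make the coefficient of `fA` equal to `e * n`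
  have key : e * (n * fA) ≤ e * ((n + m * (e - 1)) * gA + (e - 1) * m * gB + a * n * δ) := by
    linear_combination (n + m * (e - 1)) * h_same + (e - 1) * h_swap
  have key' := le_of_mul_le_mul_left key (by linarith)
  rw [← mul_le_mul_iff_of_pos_left hn]
  field_simp
  linear_combination key' + δ * hcard

section Subsampling

variable {α β : Type*} [Fintype α] [Fintype β] [DecidableEq β]

theorem card_compl_range_embedding (s : α ↪ β) :
    (#(Set.range s).toFinsetᶜ : ℝ) = Fintype.card β - Fintype.card α := by
  rw [card_compl, Set.toFinset_range, card_image_of_injective _ s.injective, card_univ,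
    Nat.cast_sub (Fintype.card_le_of_embedding s)]

theorem sum_sum_swap_trans_eq_card_smul_sum {R : Type*} [AddCommMonoid R] (i : β)
    (g : (α ↪ β) → R) :
    ∑ s ∈ univ.filter (fun s : α ↪ β => i ∈ Set.range s), ∑ j ∈ (Set.range s).toFinsetᶜ,
        g (s.trans (Equiv.swap i j).toEmbedding) =
      Fintype.card α • ∑ t ∈ univ.filter (fun t : α ↪ β => i ∉ Set.range t), g t := by
  rw [sum_sigma', smul_sum]
  simp_rw [← card_univ (α := α), ← sum_const]
  rw [← sum_product' (f := fun t _ => g t)]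
  symm
  refine sum_nbij (fun x => ⟨x.1.trans (Equiv.swap i (x.1 x.2)).toEmbedding, x.1 x.2⟩) ?_ ?_ ?_ ?_
  · rintro ⟨t, k⟩ htk
    simp only [mem_product, mem_filter, mem_univ, true_and, and_true] at htk
    simp only [mem_sigma, mem_filter, mem_univ, true_and, mem_compl, Set.mem_toFinset]
    refine ⟨⟨k, Equiv.swap_apply_right _ _⟩, ?_⟩
    rw [Equiv.swap_comm]
    exact notMem_range_trans_swap htk
  · rintro ⟨t, k⟩ _ ⟨t', k'⟩ _ h
    simp only [Sigma.mk.injEq, heq_eq_eq] at h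
    obtain ⟨ht, hk⟩ := h
    have htt' : t = t' := by
      rw [← trans_swap_trans_swap t i (t k), ht, hk, trans_swap_trans_swap]
    subst htt'
    simp [t.injective hk]
  · rintro ⟨s, j⟩ hsj
    simp only [mem_coe, mem_sigma, mem_filter, mem_univ, true_and, mem_compl,
      Set.mem_toFinset] at hsj
    obtain ⟨⟨k, hk⟩, hj⟩ := hsj
    refine ⟨⟨s.trans (Equiv.swap i j).toEmbedding, k⟩, ?_, ?_⟩
    · simpa using notMem_range_trans_swap hj
    · simp [hk, trans_swap_trans_swap]
  · rintro ⟨t, k⟩ _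
    rw [trans_swap_trans_swap]

theorem card_filter_mem_range_mul (i : β) :
    (#(univ.filter fun s : α ↪ β => i ∈ Set.range s) : ℝ) * (Fintype.card β - Fintype.card α) =
      Fintype.card α * #(univ.filter fun s : α ↪ β => i ∉ Set.range s) := by
  have h := sum_sum_swap_trans_eq_card_smul_sum (α := α) i fun _ => (1 : ℝ)
  simp only [sum_const, nsmul_eq_mul, mul_one, card_compl_range_embedding] at h
  exact h

theorem sum_comp_embedding_le_of_replacementNeighbors {X : Type*} {P : (α → X) → ℝ} {e δ : ℝ}
    (he : 1 ≤ e) (hP : ∀ E E', ReplacementNeighbors E E' → P E ≤ e * P E' + δ)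
    {D D' : β → X} {i : β} (hD : ∀ j, j ≠ i → D j = D' j) :
    ∑ s : α ↪ β, P (D ∘ s) ≤
      (1 + Fintype.card α / Fintype.card β * (e - 1)) * ∑ s : α ↪ β, P (D' ∘ s) +
        Fintype.card (α ↪ β) * (Fintype.card α / Fintype.card β * δ) := by
  set A := univ.filter (fun s : α ↪ β => i ∈ Set.range s)
  set B := univ.filter (fun s : α ↪ β => i ∉ Set.range s)
  have h_out : ∀ s ∈ B, P (D ∘ s) = P (D' ∘ s) := by
    intro s hs
    have hs : i ∉ Set.range s := (mem_filter.1 hs).2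
    congr 1
    exact funext fun k => hD _ fun h => hs ⟨k, h⟩
  have h_in : ∑ s ∈ A, P (D ∘ s) ≤ e * ∑ s ∈ A, P (D' ∘ s) + #A * δ := by
    rw [mul_sum, ← nsmul_eq_mul, ← sum_const, ← sum_add_distrib]
    exact sum_le_sum fun s hs =>
      hP _ _ (replacementNeighbors_comp hD (mem_filter.1 hs).2 fun _ _ => rfl)
  have h_swap : (Fintype.card β - Fintype.card α) * ∑ s ∈ A, P (D ∘ s) ≤
      e * (Fintype.card α * ∑ s ∈ B, P (D' ∘ s)) +
        (Fintype.card β - Fintype.card α) * (#A * δ) := by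
    calc (Fintype.card β - Fintype.card α) * ∑ s ∈ A, P (D ∘ s)
        = ∑ s ∈ A, ∑ j ∈ (Set.range s).toFinsetᶜ, P (D ∘ s) := by
          simp only [mul_sum, sum_const, nsmul_eq_mul, card_compl_range_embedding]
      _ ≤ ∑ s ∈ A, ∑ j ∈ (Set.range s).toFinsetᶜ,
            (e * P (D' ∘ s.trans (Equiv.swap i j).toEmbedding) + δ) := by
        refine sum_le_sum fun s hs => sum_le_sum fun j hj => hP _ _ ?_
        have hj : j ∉ Set.range s := by simpa using hj
        refine replacementNeighbors_comp hD (mem_filter.1 hs).2 fun k hk => ?_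
        exact (Equiv.swap_apply_of_ne_of_ne hk fun h => hj ⟨k, h⟩).symm
      _ = _ := by
        simp only [sum_add_distrib, ← mul_sum]
        rw [sum_sum_swap_trans_eq_card_smul_sum i fun t => P (D' ∘ t)]
        simp only [sum_const, nsmul_eq_mul, card_compl_range_embedding]
        ring
  have hβ : (0 : ℝ) < Fintype.card β := Nat.cast_pos.2 (Fintype.card_pos_iff.2 ⟨i⟩)
  have hN : (Fintype.card (α ↪ β) : ℝ) = #A + #B := by
    rw [← card_univ, ← card_filter_add_card_filter_not (fun s : α ↪ β => i ∈ Set.range s),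
      Nat.cast_add]
  rw [hN, ← sum_filter_add_sum_filter_not univ (fun s : α ↪ β => i ∈ Set.range s),
    ← sum_filter_add_sum_filter_not univ (fun s : α ↪ β => i ∈ Set.range s),
    sum_congr rfl h_out]
  exact subsampling_mixture_bound (Nat.cast_nonneg _) hβ he (card_filter_mem_range_mul i) h_in h_swap

end Subsampling

theorem ENNReal.le_ofReal_mul_add_ofReal_iff {x y : ENNReal} {a b : ℝ} (hx : x ≠ ⊤) (hy : y ≠ ⊤)
    (ha : 0 ≤ a) (hb : 0 ≤ b) :
    x ≤ ENNReal.ofReal a * y + ENNReal.ofReal b ↔ x.toReal ≤ a * y.toReal + b := by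
  rw [← ENNReal.toReal_le_toReal hx (by finiteness), ENNReal.toReal_add (by finiteness)
    (by finiteness), ENNReal.toReal_mul, ENNReal.toReal_ofReal ha, ENNReal.toReal_ofReal hb]

namespace PMF

variable {α Y : Type*}

theorem toOuterMeasure_apply_ne_top (p : PMF Y) (S : Set Y) : p.toOuterMeasure S ≠ ⊤ := by
  rw [toOuterMeasure_apply]
  exact p.tsum_coe_indicator_ne_top S

theorem toOuterMeasure_bind_uniformOfFintype_apply [Fintype α] [Nonempty α] (f : α → PMF Y)
    (S : Set Y) :
    ((uniformOfFintype α).bind f).toOuterMeasure S =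
      (Fintype.card α : ENNReal)⁻¹ * ∑ a, (f a).toOuterMeasure S := by
  rw [toOuterMeasure_bind_apply, tsum_fintype, mul_sum]
  simp only [uniformOfFintype_apply]

end PMF

theorem amplification_by_subsampling_general
    {X Y : Type*} {m n : ℕ} [Nonempty (Fin m ↪ Fin n)]
    (M : (Fin m → X) → PMF Y) (ε δ : ℝ) (hε : 0 ≤ ε) (hδ : 0 ≤ δ)
    (hM : ∀ D D' : Fin m → X, (∃ i, ∀ j, j ≠ i → D j = D' j) → ∀ S : Set Y,
      (M D).toOuterMeasure S ≤
        ENNReal.ofReal (Real.exp ε) * (M D').toOuterMeasure S + ENNReal.ofReal δ) :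
    ∀ D D' : Fin n → X, (∃ i, ∀ j, j ≠ i → D j = D' j) → ∀ S : Set Y,
      ((PMF.uniformOfFintype (Fin m ↪ Fin n)).bind (fun s => M (D ∘ s))).toOuterMeasure S ≤
        ENNReal.ofReal (Real.exp (Real.log (1 + ((m : ℝ) / n) * (Real.exp ε - 1)))) *
          ((PMF.uniformOfFintype (Fin m ↪ Fin n)).bind (fun s => M (D' ∘ s))).toOuterMeasure S
        + ENNReal.ofReal (((m : ℝ) / n) * δ) := by
  rintro D D' ⟨i, hi⟩ S
  have he : 1 ≤ Real.exp ε := Real.one_le_exp hε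
  have hc : 0 < 1 + (m : ℝ) / n * (Real.exp ε - 1) := by
    have : 0 ≤ (m : ℝ) / n := by positivity
    nlinarith
  have hmean_ne_top : ∀ E : Fin n → X, ((Fintype.card (Fin m ↪ Fin n) : ENNReal)⁻¹ *
      ∑ s : Fin m ↪ Fin n, (M (E ∘ s)).toOuterMeasure S) ≠ ⊤ := fun E =>
    ENNReal.mul_ne_top (ENNReal.inv_ne_top.2 (Nat.cast_ne_zero.2 Fintype.card_ne_zero))
      (ENNReal.sum_ne_top.2 fun _ _ => PMF.toOuterMeasure_apply_ne_top _ S)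
  have key := sum_comp_embedding_le_of_replacementNeighbors he
    (P := fun E => ((M E).toOuterMeasure S).toReal)
    (fun E E' h => (ENNReal.le_ofReal_mul_add_ofReal_iff (PMF.toOuterMeasure_apply_ne_top _ S)
      (PMF.toOuterMeasure_apply_ne_top _ S) (Real.exp_pos ε).le hδ).1 (hM E E' h S)) hi
  rw [Fintype.card_fin, Fintype.card_fin] at key
  rw [Real.exp_log hc, PMF.toOuterMeasure_bind_uniformOfFintype_apply,
    PMF.toOuterMeasure_bind_uniformOfFintype_apply,
    ENNReal.le_ofReal_mul_add_ofReal_iff (hmean_ne_top D) (hmean_ne_top D') hc.le (by positivity)]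
  simp only [ENNReal.toReal_mul, ENNReal.toReal_inv, ENNReal.toReal_natCast,
    ENNReal.toReal_sum fun s _ => PMF.toOuterMeasure_apply_ne_top _ S]
  refine (mul_le_mul_of_nonneg_left key (by positivity)).trans_eq ?_
  field_simp

/-- Privacy amplification by subsampling m-out-of-n without replacement. -/
theorem amplification_by_subsampling
    {X Y : Type*} {m n : ℕ} [Nonempty (Fin m ↪ Fin n)] (hm : 0 < m) (hmn : m ≤ n)
    (M : (Fin m → X) → PMF Y) (ε δ : ℝ) (hε : 0 ≤ ε) (hδ : 0 ≤ δ)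
    (hM : ∀ D D' : Fin m → X, (∃ i, ∀ j, j ≠ i → D j = D' j) → ∀ S : Set Y,
      (M D).toOuterMeasure S ≤
        ENNReal.ofReal (Real.exp ε) * (M D').toOuterMeasure S + ENNReal.ofReal δ) :
    ∀ D D' : Fin n → X, (∃ i, ∀ j, j ≠ i → D j = D' j) → ∀ S : Set Y,
      ((PMF.uniformOfFintype (Fin m ↪ Fin n)).bind (fun s => M (D ∘ s))).toOuterMeasure S ≤
        ENNReal.ofReal (Real.exp (Real.log (1 + ((m : ℝ) / n) * (Real.exp ε - 1)))) *
          ((PMF.uniformOfFintype (Fin m ↪ Fin n)).bind (fun s => M (D' ∘ s))).toOuterMeasure S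
        + ENNReal.ofReal (((m : ℝ) / n) * δ) :=
  amplification_by_subsampling_general M ε δ hε hδ hM
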